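/- Let ζ : 𝒬₀ → ℝ and let f ∈ F_ζ be such that S = supp(f) has rank 0. Then there exists g ∈ F_ζ with π(g) = π(f) whose support T = supp(g) is a tree (contains no cycles) and satisfies T̄ = S̄; in particular, every rank-0 admissible configuration contains a tree with the same closure. -/

import Mathlib

/-!
Common framework: finite quivers, flows, boundaries, cycles, closures, the projection π,
and the solution polyhedra of the (generalised) transportation problem, following
Sardo Infirri, "Orbifold Singularities and McKay Flows".
-/

open Finset

/-- A (finite) quiver given by tail and head maps on a type of arrows. -/
structure FQuiver (V A : Type) where
  t : A → V
  h : A → V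

namespace FQuiver

variable {V A : Type}

/-- The boundary (net contribution) of a flow `f : A → R` at each vertex. -/
def boundary [Fintype A] [DecidableEq V] (Q : FQuiver V A) {R : Type} [AddCommGroup R]
    (f : A → R) : V → R := fun v =>
  (∑ a ∈ univ.filter (fun a => Q.h a = v), f a) -
  (∑ a ∈ univ.filter (fun a => Q.t a = v), f a)

/-- Source of a step (an arrow together with a direction of traversal). -/
def stepSrc (Q : FQuiver V A) (s : A × Bool) : V := if s.2 then Q.t s.1 else Q.h s.1

/-- Destination of a step. -/
def stepDst (Q : FQuiver V A) (s : A × Bool) : V := if s.2 then Q.h s.1 else Q.t s.1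

/-- A walk (path) from `v` to `v'` in the underlying undirected graph of the quiver:
a nonempty list of steps which compose, with consecutive arrows distinct. -/
def IsWalk (Q : FQuiver V A) (p : List (A × Bool)) (v v' : V) : Prop :=
  p ≠ [] ∧
  p.head?.map Q.stepSrc = some v ∧
  p.getLast?.map Q.stepDst = some v' ∧
  List.Chain' (fun s s' => Q.stepDst s = Q.stepSrc s') p ∧
  List.Chain' (fun s s' : A × Bool => s.1 ≠ s'.1) p

/-- A cycle: a closed walk. -/
def IsCycle (Q : FQuiver V A) (p : List (A × Bool)) : Prop := ∃ v, Q.IsWalk p v v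

end FQuiver

variable {V A : Type}

/-- The positive part of a walk/cycle: the arrows traversed in agreement with it. -/
def posArrows (p : List (A × Bool)) : Set A := {a | (a, true) ∈ p}

/-- The negative part of a walk/cycle: the arrows traversed against it. -/
def negArrows (p : List (A × Bool)) : Set A := {a | (a, false) ∈ p}

/-- The (integral) basic flow associated to a walk/cycle. -/
def basicFlowZ [DecidableEq A] (p : List (A × Bool)) : A → ℤ := fun a =>
  (p.count (a, true) : ℤ) - (p.count (a, false) : ℤ)

/-- The basic flow associated to a walk/cycle, as a real flow. -/
def basicFlow [DecidableEq A] (p : List (A × Bool)) : A → ℝ := fun a =>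
  (basicFlowZ p a : ℝ)

/-- The linear map induced by a typing map `π : A → Fin n` on flows. -/
def piMap [Fintype A] {n : ℕ} (π : A → Fin n) {R : Type} [AddCommMonoid R] (f : A → R) :
    Fin n → R := fun i => ∑ a ∈ univ.filter (fun a => π a = i), f a

/-- The support of a flow. -/
def fsupport (f : A → ℝ) : Set A := {a | f a ≠ 0}

/-- The polyhedron `F_ζ` of admissible (nonnegative) `ζ`-flows. -/
def Fpoly [Fintype A] [DecidableEq V] (Q : FQuiver V A) (ζ : V → ℝ) : Set (A → ℝ) :=
  {f | (∀ a, 0 ≤ f a) ∧ Q.boundary f = ζ}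

/-- A set of arrows contains a cycle. -/
def ContainsCycle (Q : FQuiver V A) (S : Set A) : Prop :=
  ∃ p : List (A × Bool), Q.IsCycle p ∧ ∀ s ∈ p, s.1 ∈ S

/-- A set of arrows is closed if, for every cycle of type zero, it contains the positive
part iff it contains the negative part. -/
def IsClosedConfig [Fintype A] [DecidableEq A] {n : ℕ} (Q : FQuiver V A) (π : A → Fin n)
    (T : Set A) : Prop :=
  ∀ p : List (A × Bool), Q.IsCycle p → piMap π (basicFlowZ p) = 0 →
    (posArrows p ⊆ T ↔ negArrows p ⊆ T)

/-- The closure `S̄` of a configuration: the smallest closed over-set. -/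
def confClosure [Fintype A] [DecidableEq A] {n : ℕ} (Q : FQuiver V A) (π : A → Fin n)
    (S : Set A) : Set A :=
  ⋂₀ {T | S ⊆ T ∧ IsClosedConfig Q π T}

/-- `Z₀(S)`: the space of flows with zero boundary vanishing outside `S`. -/
def Z0 [Fintype A] [DecidableEq V] (Q : FQuiver V A) (S : Set A) : Set (A → ℝ) :=
  {g | Q.boundary g = 0 ∧ ∀ a ∉ S, g a = 0}

/-- `F₀(S)`: the cone of flows with zero boundary which are nonnegative outside `S`. -/
def F0cone [Fintype A] [DecidableEq V] (Q : FQuiver V A) (S : Set A) : Set (A → ℝ) :=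
  {g | Q.boundary g = 0 ∧ ∀ a ∉ S, 0 ≤ g a}

/-- The rank of a configuration: the dimension of `span(π(Z₀(S̄)))`. -/
noncomputable def confRank [Fintype A] [DecidableEq A] [DecidableEq V] {n : ℕ} (Q : FQuiver V A)
    (π : A → Fin n) (S : Set A) : ℕ :=
  Module.finrank ℝ
    (Submodule.span ℝ ((fun g : A → ℝ => piMap π g) '' Z0 Q (confClosure Q π S)))

/-- The projected polyhedron `π(F_ζ) ⊆ ℝⁿ`. -/
def piImg [Fintype A] [DecidableEq V] {n : ℕ} (Q : FQuiver V A) (π : A → Fin n) (ζ : V → ℝ) :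
    Set (Fin n → ℝ) := (fun g : A → ℝ => piMap π g) '' Fpoly Q ζ

/-- The tangent cone `ℝ₊(P − x)` of a convex set at a point. -/
def polyTangentCone {E : Type} [AddCommGroup E] [Module ℝ E] (P : Set E) (x : E) : Set E :=
  {y | ∃ t : ℝ, 0 ≤ t ∧ ∃ p ∈ P, y = t • (p - x)}

/-- A face of a convex set: a convex extreme subset. -/
def IsFace {E : Type} [AddCommGroup E] [Module ℝ E] (P F : Set E) : Prop :=
  Convex ℝ F ∧ IsExtreme ℝ P F

/-- `Face_ζ(S)` computed from a flow `f`: `π(F_ζ) ∩ (π(f) + span(π(Z₀(S̄))))`. -/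
def faceOf [Fintype A] [DecidableEq A] [DecidableEq V] {n : ℕ} (Q : FQuiver V A)
    (π : A → Fin n) (ζ : V → ℝ) (S : Set A) (f : A → ℝ) : Set (Fin n → ℝ) :=
  piImg Q π ζ ∩
    {y | y - piMap π f ∈
      Submodule.span ℝ ((fun g : A → ℝ => piMap π g) '' Z0 Q (confClosure Q π S))}

/-- The McKay quiver of the cyclic action `1/r (w₁, …, w_n)`: vertices `ℤ/rℤ` and one
arrow `a_v^i : v → v − w_i` for each vertex `v` and each `i`. -/
def mckayQuiver (r n : ℕ) (w : Fin n → ZMod r) : FQuiver (ZMod r) (ZMod r × Fin n) where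
  t := fun a => a.1
  h := fun a => a.1 - w a.2

/-- The commutation flow `χ_v^i + χ_{v−w_i}^j − χ_v^j − χ_{v−w_j}^i`. -/
def commFlow (r n : ℕ) (w : Fin n → ZMod r) (v : ZMod r) (i j : Fin n) :
    ZMod r × Fin n → ℤ := fun a =>
  (if a = (v, i) then 1 else 0) + (if a = (v - w i, j) then 1 else 0)
    - (if a = (v, j) then 1 else 0) - (if a = (v - w j, i) then 1 else 0)

/-- `Λ²`: the subgroup of integral flows generated by the commutation flows. -/
def mckayLambda2 (r n : ℕ) (w : Fin n → ZMod r) : AddSubgroup (ZMod r × Fin n → ℤ) :=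
  AddSubgroup.closure {g | ∃ v i j, g = commFlow r n w v i j}

/-!
Rank zero means that π kills every circulation supported in the closure `S̄`, so every cycle in
`supp f` has type zero. Pushing `f` around a cycle with pairwise distinct arrows inside its
support, as far as nonnegativity allows (the ratio test), keeps `∂f` and `π(f)`, empties one
arrow and keeps every arrow traversed the other way; since the cycle has type zero, closedness
puts the emptied arrows back into the closure. Thus the support shrinks, the closure (and with it
the rank) is unchanged, and iterating ends at a support without cycles.
-/

namespace FQuiver

variable [Fintype A] [DecidableEq V] (Q : FQuiver V A)

theorem boundary_add {R : Type} [AddCommGroup R] (f g : A → R) :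
    Q.boundary (f + g) = Q.boundary f + Q.boundary g := by
  funext v
  simp only [boundary, Pi.add_apply, sum_add_distrib]
  abel

theorem boundary_sub {R : Type} [AddCommGroup R] (f g : A → R) :
    Q.boundary (f - g) = Q.boundary f - Q.boundary g := by
  funext v
  simp only [boundary, Pi.sub_apply, sum_sub_distrib]
  abel

theorem boundary_smul {K R : Type} [Monoid K] [AddCommGroup R] [DistribMulAction K R]
    (c : K) (f : A → R) : Q.boundary (c • f) = c • Q.boundary f := by
  funext v
  simp only [boundary, Pi.smul_apply, smul_sub, smul_sum]

theorem boundary_single {R : Type} [AddCommGroup R] [DecidableEq A] (a : A) (c : R) :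
    Q.boundary (Pi.single a c) = Pi.single (Q.h a) c - Pi.single (Q.t a) c := by
  funext v
  simp [boundary, Pi.single_apply, eq_comm]

theorem boundary_single_step [DecidableEq A] (s : A × Bool) :
    Q.boundary (Pi.single s.1 (if s.2 then 1 else -1 : ℝ)) =
      Pi.single (Q.stepDst s) 1 - Pi.single (Q.stepSrc s) 1 := by
  obtain ⟨a, _ | _⟩ := s
  · rw [boundary_single]
    simp only [stepDst, stepSrc, Bool.false_eq_true, if_false, Pi.single_neg]
    abel
  · simp [boundary_single, stepDst, stepSrc]

end FQuiver

theorem piMap_sub [Fintype A] {n : ℕ} (π : A → Fin n) {R : Type} [AddCommGroup R]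
    (f g : A → R) : piMap π (f - g) = piMap π f - piMap π g := by
  funext i
  simp [piMap, sum_sub_distrib]

theorem piMap_smul [Fintype A] {n : ℕ} (π : A → Fin n) {K R : Type} [Monoid K] [AddCommMonoid R]
    [DistribMulAction K R] (c : K) (f : A → R) : piMap π (c • f) = c • piMap π f := by
  funext i
  simp [piMap, smul_sum]

theorem basicFlow_cons [DecidableEq A] (s : A × Bool) (p : List (A × Bool)) :
    basicFlow (s :: p) = Pi.single s.1 (if s.2 then 1 else -1) + basicFlow p := by
  funext a
  obtain ⟨b, c⟩ := s
  rcases eq_or_ne a b with rfl | hb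
  · cases c <;> simp [basicFlow, basicFlowZ] <;> ring
  · simp [basicFlow, basicFlowZ, hb, hb.symm]

namespace FQuiver

variable [Fintype A] [DecidableEq V] [DecidableEq A] (Q : FQuiver V A)

theorem boundary_basicFlow_cons (s : A × Bool) (p : List (A × Bool))
    (hp : (s :: p).IsChain fun s s' => Q.stepDst s = Q.stepSrc s') :
    Q.boundary (basicFlow (s :: p)) =
      Pi.single (Q.stepDst ((s :: p).getLast (List.cons_ne_nil s p))) 1 -
        Pi.single (Q.stepSrc s) 1 := by
  induction p generalizing s with
  | nil =>
    have hnil : basicFlow ([] : List (A × Bool)) = 0 := by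
      funext a
      simp [basicFlow, basicFlowZ]
    rw [basicFlow_cons, hnil, add_zero, boundary_single_step, List.getLast_singleton]
  | cons s' p ih =>
    rw [basicFlow_cons, boundary_add, boundary_single_step, ih s' hp.tail,
      List.getLast_cons_cons, (List.isChain_cons_cons.mp hp).1]
    abel

variable {Q}

theorem IsCycle.boundary_basicFlow {p : List (A × Bool)} (hp : Q.IsCycle p) :
    Q.boundary (basicFlow p) = 0 := by
  obtain ⟨v, hne, hh, hl, hc, -⟩ := hp
  obtain ⟨s, p, rfl⟩ := List.exists_cons_of_ne_nil hne
  rw [List.getLast?_eq_some_getLast (List.cons_ne_nil s p)] at hl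
  simp only [List.head?_cons, Option.map_some, Option.some.injEq] at hh hl
  rw [Q.boundary_basicFlow_cons s p hc, hh, hl, sub_self]

end FQuiver

theorem List.exists_eq_append_cons_append_cons_of_not_pairwise {α : Type*} {R : α → α → Prop}
    {l : List α} (h : ¬ l.Pairwise R) :
    ∃ l₁ x l₂ y l₃, l = l₁ ++ x :: (l₂ ++ y :: l₃) ∧ ¬ R x y := by
  rw [List.pairwise_iff_forall_sublist] at h
  push Not at h
  obtain ⟨x, y, hxy, hR⟩ := h
  obtain ⟨r₁, r₂, rfl, hx, hy⟩ := List.cons_sublist_iff.mp hxy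
  obtain ⟨l₁, l₂, rfl⟩ := List.append_of_mem hx
  obtain ⟨l₂', l₃, rfl⟩ := List.append_of_mem (List.singleton_sublist.mp hy)
  exact ⟨l₁, x, l₂ ++ l₂', y, l₃, by simp, hR⟩

namespace FQuiver

variable {Q : FQuiver V A}

theorem stepDst_eq_stepSrc_of_reverse {s s' : A × Bool} (h₁ : s.1 = s'.1) (h₂ : s.2 ≠ s'.2) :
    Q.stepDst s = Q.stepSrc s' := by
  obtain ⟨a, b⟩ := s
  obtain ⟨a', b'⟩ := s'
  obtain rfl : a = a' := h₁
  cases b <;> cases b' <;> simp_all [stepDst, stepSrc]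

theorem IsCycle.of_infix {p m : List (A × Bool)} (hp : Q.IsCycle p) (hm : m <:+: p)
    (hne : m ≠ []) (hclosed : Q.stepDst (m.getLast hne) = Q.stepSrc (m.head hne)) :
    Q.IsCycle m := by
  obtain ⟨-, -, -, -, hc, hd⟩ := hp
  exact ⟨Q.stepSrc (m.head hne), hne, by rw [List.head?_eq_some_head hne, Option.map_some],
    by rw [List.getLast?_eq_some_getLast hne, Option.map_some, hclosed], hc.infix hm,
    hd.infix hm⟩

/-- A repeated arrow splits a cycle: traversed twice in the same direction it closes up the
stretch from its first occurrence, traversed in opposite directions it closes up the stretch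
strictly between the two occurrences. -/
theorem IsCycle.exists_shorter_infix {p : List (A × Bool)} (hp : Q.IsCycle p)
    (hdup : ¬ (p.map Prod.fst).Nodup) :
    ∃ m, Q.IsCycle m ∧ m <:+: p ∧ m.length < p.length := by
  rw [List.Nodup, List.pairwise_map] at hdup
  obtain ⟨l₁, s₁, l₂, s₂, l₃, rfl, hs⟩ :=
    List.exists_eq_append_cons_append_cons_of_not_pairwise hdup
  have harrow : s₁.1 = s₂.1 := not_not.mp hs
  obtain ⟨-, -, -, -, hc, hd⟩ := id hp
  have hjoin : ∀ u w (hu : u ≠ []) (hw : w ≠ []), l₁ ++ s₁ :: (l₂ ++ s₂ :: l₃) = u ++ w →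
      Q.stepDst (u.getLast hu) = Q.stepSrc (w.head hw) :=
    fun u w hu hw h => (h ▸ hc).rel_getLast_head_of_append hu hw
  have hlast : Q.stepDst ((s₁ :: l₂).getLast (List.cons_ne_nil _ _)) = Q.stepSrc s₂ := by
    simpa using hjoin (l₁ ++ s₁ :: l₂) (s₂ :: l₃) (by simp) (by simp) (by simp)
  by_cases hdir : s₁.2 = s₂.2
  · obtain rfl : s₁ = s₂ := Prod.ext harrow hdir
    have hinfix : s₁ :: l₂ <:+: l₁ ++ s₁ :: (l₂ ++ s₁ :: l₃) := ⟨l₁, s₁ :: l₃, by simp⟩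
    refine ⟨s₁ :: l₂, hp.of_infix hinfix (List.cons_ne_nil _ _) hlast, hinfix, ?_⟩
    simp only [List.length_append, List.length_cons]
    omega
  · have hne : l₂ ≠ [] := by
      rintro rfl
      exact (List.isChain_append_cons_cons.mp hd).2.1 harrow
    have hhead : Q.stepDst s₁ = Q.stepSrc (l₂.head hne) := by
      simpa [List.head_append_of_ne_nil hne] using
        hjoin (l₁ ++ [s₁]) (l₂ ++ s₂ :: l₃) (by simp) (by simp [hne]) (by simp)
    have hlast' : Q.stepDst (l₂.getLast hne) = Q.stepSrc s₂ := by
      simpa [List.getLast_cons hne] using hlast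
    have hinfix : l₂ <:+: l₁ ++ s₁ :: (l₂ ++ s₂ :: l₃) := ⟨l₁ ++ [s₁], s₂ :: l₃, by simp⟩
    refine ⟨l₂, hp.of_infix hinfix hne ?_, hinfix, ?_⟩
    · rw [hlast', ← hhead, stepDst_eq_stepSrc_of_reverse harrow hdir]
    · simp only [List.length_append, List.length_cons]
      omega

theorem IsCycle.exists_nodup_arrows {p : List (A × Bool)} (hp : Q.IsCycle p) :
    ∃ q, Q.IsCycle q ∧ q <:+: p ∧ (q.map Prod.fst).Nodup := by
  induction h : p.length using Nat.strong_induction_on generalizing p with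
  | _ N ih =>
  by_cases hnd : (p.map Prod.fst).Nodup
  · exact ⟨p, hp, List.infix_refl p, hnd⟩
  · obtain ⟨m, hm, hmp, hlen⟩ := hp.exists_shorter_infix hnd
    obtain ⟨q, hq, hqm, hqnd⟩ := ih _ (h ▸ hlen) hm rfl
    exact ⟨q, hq, hqm.trans hmp, hqnd⟩

end FQuiver

section BasicFlow

variable [DecidableEq A]

theorem basicFlowZ_of_mem {q : List (A × Bool)} (hnd : (q.map Prod.fst).Nodup) {a : A}
    {b : Bool} (h : (a, b) ∈ q) : basicFlowZ q a = if b then 1 else -1 := by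
  have hcount : q.count (a, b) = 1 := List.count_eq_one_of_mem (hnd.of_map _) h
  have hcount' : q.count (a, !b) = 0 :=
    List.count_eq_zero.mpr fun h' => by simpa using List.inj_on_of_nodup_map hnd h h' rfl
  cases b <;> simp_all [basicFlowZ]

theorem basicFlowZ_eq_zero {q : List (A × Bool)} {a : A} (h : ∀ b, (a, b) ∉ q) :
    basicFlowZ q a = 0 := by
  simp [basicFlowZ, List.count_eq_zero.mpr (h true), List.count_eq_zero.mpr (h false)]

theorem piMap_basicFlow [Fintype A] {n : ℕ} (π : A → Fin n) (q : List (A × Bool)) (i : Fin n) :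
    piMap π (basicFlow q) i = ((piMap π (basicFlowZ q) i : ℤ) : ℝ) := by
  simp [piMap, basicFlow]

end BasicFlow

section Closure

variable [Fintype A] [DecidableEq A] (Q : FQuiver V A) {n : ℕ} (π : A → Fin n)

theorem subset_confClosure (S : Set A) : S ⊆ confClosure Q π S :=
  fun _ ha => Set.mem_sInter.mpr fun _ hT => hT.1 ha

theorem confClosure_subset {S T : Set A} (hST : S ⊆ T) (hT : IsClosedConfig Q π T) :
    confClosure Q π S ⊆ T :=
  Set.sInter_subset_of_mem ⟨hST, hT⟩

theorem confClosure_mono {S T : Set A} (hST : S ⊆ T) : confClosure Q π S ⊆ confClosure Q π T :=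
  fun _ ha => Set.mem_sInter.mpr fun T' hT' => Set.mem_sInter.mp ha T' ⟨hST.trans hT'.1, hT'.2⟩

theorem isClosedConfig_confClosure (S : Set A) : IsClosedConfig Q π (confClosure Q π S) := by
  intro p hp hπ
  have hmem : ∀ {B : Set A}, B ⊆ confClosure Q π S ↔ ∀ T, S ⊆ T ∧ IsClosedConfig Q π T → B ⊆ T :=
    Set.subset_sInter_iff
  simp only [hmem]
  exact forall_congr' fun T => imp_congr_right fun hT => hT.2 p hp hπ

theorem confClosure_eq_of_subset {S T : Set A} (hTS : T ⊆ S) (hST : S ⊆ confClosure Q π T) :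
    confClosure Q π T = confClosure Q π S :=
  (confClosure_mono Q π hTS).antisymm
    (confClosure_subset Q π hST (isClosedConfig_confClosure Q π T))

variable [DecidableEq V]

theorem piMap_eq_zero_of_confRank_eq_zero {S : Set A} (hS : confRank Q π S = 0) {χ : A → ℝ}
    (hχ : χ ∈ Z0 Q (confClosure Q π S)) : piMap π χ = 0 := by
  have hmem : piMap π χ ∈ Submodule.span ℝ ((piMap π ·) '' Z0 Q (confClosure Q π S)) :=
    Submodule.subset_span ⟨χ, hχ, rfl⟩
  rwa [Submodule.finrank_eq_zero.mp hS, Submodule.mem_bot] at hmem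

end Closure

/-- The ratio test of the simplex method. -/
theorem exists_pos_sub_smul_nonneg {ι : Type*} [Fintype ι] {g h : ι → ℝ} (hg : 0 ≤ g)
    (hsupp : ∀ i, h i ≠ 0 → g i ≠ 0) (hpos : ∃ i, 0 < h i) :
    ∃ t : ℝ, 0 < t ∧ 0 ≤ g - t • h ∧ ∃ i, h i ≠ 0 ∧ (g - t • h) i = 0 := by
  obtain ⟨i₀, hi₀, hmin⟩ := (univ.filter (0 < h ·)).exists_min_image (fun i => g i / h i)
    (by simpa [Finset.Nonempty] using hpos)
  simp only [mem_filter, mem_univ, true_and] at hi₀ hmin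
  have ht : 0 < g i₀ / h i₀ := div_pos ((hg i₀).lt_of_ne' (hsupp i₀ hi₀.ne')) hi₀
  refine ⟨g i₀ / h i₀, ht, fun i => ?_, i₀, hi₀.ne', ?_⟩
  · rcases lt_or_ge 0 (h i) with hi | hi
    · have := (le_div_iff₀ hi).mp (hmin i hi)
      simp only [Pi.zero_apply, Pi.sub_apply, Pi.smul_apply, smul_eq_mul]
      linarith
    · simp only [Pi.zero_apply, Pi.sub_apply, Pi.smul_apply, smul_eq_mul]
      linarith [show (0 : ℝ) ≤ g i from hg i, mul_nonpos_of_nonneg_of_nonpos ht.le hi]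
  · simp [div_mul_cancel₀ _ hi₀.ne']

section Descent

variable [Fintype A] [DecidableEq A] {Q : FQuiver V A} {n : ℕ} {π : A → Fin n}

theorem FQuiver.IsCycle.fst_mem_confClosure {q : List (A × Bool)} (hq : Q.IsCycle q)
    (hπ : piMap π (basicFlowZ q) = 0) {S : Set A} {b : Bool}
    (hb : {a | (a, b) ∈ q} ⊆ confClosure Q π S) {s : A × Bool} (hs : s ∈ q) :
    s.1 ∈ confClosure Q π S := by
  have hiff := isClosedConfig_confClosure Q π S q hq hπ
  obtain ⟨a, _ | _⟩ := s <;> cases b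
  · exact hb hs
  · exact hiff.mp hb hs
  · exact hiff.mpr hb hs
  · exact hb hs

variable [DecidableEq V]

theorem FQuiver.IsCycle.piMap_basicFlowZ_eq_zero {q : List (A × Bool)} (hq : Q.IsCycle q)
    {S : Set A} (hqS : ∀ s ∈ q, s.1 ∈ S) (hS : confRank Q π S = 0) :
    piMap π (basicFlowZ q) = 0 := by
  have hZ : basicFlow q ∈ Z0 Q (confClosure Q π S) := by
    refine ⟨hq.boundary_basicFlow, fun a ha => ?_⟩
    have : ∀ b, (a, b) ∉ q := fun b hab => ha (subset_confClosure Q π S (hqS _ hab))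
    simp [basicFlow, basicFlowZ_eq_zero this]
  funext i
  simpa [piMap_basicFlow] using congrFun (piMap_eq_zero_of_confRank_eq_zero Q π hS hZ) i

theorem FQuiver.IsCycle.exists_signed_circulation {q : List (A × Bool)} (hq : Q.IsCycle q)
    (hnd : (q.map Prod.fst).Nodup) (hπ : piMap π (basicFlowZ q) = 0) (b₀ : Bool) :
    ∃ h : A → ℝ, (∀ {a b}, (a, b) ∈ q → h a = if b = b₀ then 1 else -1) ∧
      (∀ a, (∀ b, (a, b) ∉ q) → h a = 0) ∧ Q.boundary h = 0 ∧ piMap π h = 0 := by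
  refine ⟨(if b₀ then 1 else -1 : ℝ) • basicFlow q, fun {a b} hab => ?_, fun a ha => ?_, ?_, ?_⟩
  · simp only [Pi.smul_apply, basicFlow, basicFlowZ_of_mem hnd hab, smul_eq_mul]
    cases b <;> cases b₀ <;> norm_num
  · simp [basicFlow, basicFlowZ_eq_zero ha]
  · rw [Q.boundary_smul, hq.boundary_basicFlow, smul_zero]
  · rw [piMap_smul]
    funext i
    simp [piMap_basicFlow, congrFun hπ i]

theorem exists_ssubset_fsupport_of_isCycle {ζ : V → ℝ} {g : A → ℝ} (hg : g ∈ Fpoly Q ζ)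
    {q : List (A × Bool)} (hq : Q.IsCycle q) (hnd : (q.map Prod.fst).Nodup)
    (hqS : ∀ s ∈ q, s.1 ∈ fsupport g) (hπ : piMap π (basicFlowZ q) = 0)
    {s₀ : A × Bool} (hs₀ : s₀ ∈ q) :
    ∃ g' ∈ Fpoly Q ζ, piMap π g' = piMap π g ∧ fsupport g' ⊂ fsupport g ∧
      confClosure Q π (fsupport g') = confClosure Q π (fsupport g) := by
  obtain ⟨h, h_mem, h_zero, h_bd, h_π⟩ := hq.exists_signed_circulation hnd hπ s₀.2
  have h_arrow : ∀ a, h a ≠ 0 → ∃ b, (a, b) ∈ q := fun a ha => by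
    by_contra! hq'
    exact ha (h_zero a hq')
  have h_supp : ∀ a, h a ≠ 0 → g a ≠ 0 := fun a ha =>
    let ⟨_, hab⟩ := h_arrow a ha
    hqS _ hab
  obtain ⟨t, ht, hnonneg, a₀, ha₀, hg'a₀⟩ :=
    exists_pos_sub_smul_nonneg hg.1 h_supp ⟨s₀.1, by simp [h_mem hs₀]⟩
  have hsub : fsupport (g - t • h) ⊆ fsupport g := fun a ha hga =>
    ha (by simp [hga, not_imp_not.mp (h_supp a) hga])
  have hback : {a | (a, !s₀.2) ∈ q} ⊆ fsupport (g - t • h) := fun a (hab : (a, !s₀.2) ∈ q) => by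
    have hval : (g - t • h) a = g a + t := by simp [h_mem hab]
    show (g - t • h) a ≠ 0
    exact hval ▸ (add_pos_of_nonneg_of_pos (hg.1 a) ht).ne'
  refine ⟨g - t • h, ⟨hnonneg, ?_⟩, ?_, ⟨hsub, fun hle => hle (h_supp a₀ ha₀) hg'a₀⟩, ?_⟩
  · rw [Q.boundary_sub, Q.boundary_smul, h_bd, hg.2, smul_zero, sub_zero]
  · rw [piMap_sub, piMap_smul, h_π, smul_zero, sub_zero]
  · refine confClosure_eq_of_subset Q π hsub fun a ha => ?_
    by_cases ha' : a ∈ fsupport (g - t • h)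
    · exact subset_confClosure Q π _ ha'
    · obtain ⟨b, hab⟩ := h_arrow a fun h0 => ha' (by simpa [fsupport, h0] using ha)
      exact hq.fst_mem_confClosure hπ (hback.trans (subset_confClosure Q π _)) hab

theorem exists_ssubset_fsupport_of_containsCycle {ζ : V → ℝ} {g : A → ℝ} (hg : g ∈ Fpoly Q ζ)
    (hrank : confRank Q π (fsupport g) = 0) (hcyc : ContainsCycle Q (fsupport g)) :
    ∃ g' ∈ Fpoly Q ζ, piMap π g' = piMap π g ∧ fsupport g' ⊂ fsupport g ∧
      confClosure Q π (fsupport g') = confClosure Q π (fsupport g) := by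
  obtain ⟨p, hp, hpS⟩ := hcyc
  obtain ⟨q, hq, hqp, hnd⟩ := hp.exists_nodup_arrows
  have hqS : ∀ s ∈ q, s.1 ∈ fsupport g := fun s hs => hpS s (hqp.subset hs)
  obtain ⟨-, hne, -⟩ := id hq
  obtain ⟨s₀, hs₀⟩ := List.exists_mem_of_ne_nil q hne
  exact exists_ssubset_fsupport_of_isCycle hg hq hnd hqS
    (hq.piMap_basicFlowZ_eq_zero hqS hrank) hs₀

end Descent

theorem statement13_general {V A : Type} [Fintype A] [DecidableEq V] [DecidableEq A]
    (Q : FQuiver V A) {n : ℕ} (π : A → Fin n) (ζ : V → ℝ)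
    (f : A → ℝ) (hf : f ∈ Fpoly Q ζ) (hrank : confRank Q π (fsupport f) = 0) :
    ∃ g ∈ Fpoly Q ζ, piMap π g = piMap π f ∧ fsupport g ⊆ fsupport f ∧
      ¬ ContainsCycle Q (fsupport g) ∧
      confClosure Q π (fsupport g) = confClosure Q π (fsupport f) := by
  induction hN : (fsupport f).ncard using Nat.strong_induction_on generalizing f with
  | _ N ih =>
  by_cases hcyc : ContainsCycle Q (fsupport f)
  · obtain ⟨f', hf', hπ, hlt, hcl⟩ := exists_ssubset_fsupport_of_containsCycle hf hrank hcyc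
    have hrank' : confRank Q π (fsupport f') = 0 := by rwa [confRank, hcl]
    obtain ⟨g, hg, hgπ, hgS, hgc, hgcl⟩ :=
      ih _ (hN ▸ Set.ncard_lt_ncard hlt) f' hf' hrank' rfl
    exact ⟨g, hg, hgπ.trans hπ, hgS.trans hlt.subset, hgc, hgcl.trans hcl⟩
  · exact ⟨f, hf, rfl, subset_rfl, hcyc, rfl⟩

/-- If `f ∈ F_ζ` and `S = supp(f)` has rank `0`, then there is
`g ∈ F_ζ` with `π(g) = π(f)` whose support is a tree `T ⊆ S` with `T̄ = S̄`. -/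
theorem statement13 {V A : Type} [Fintype V] [Fintype A] [DecidableEq V] [DecidableEq A]
    (Q : FQuiver V A) {n : ℕ} (hn : 1 ≤ n) (π : A → Fin n) (ζ : V → ℝ)
    (f : A → ℝ) (hf : f ∈ Fpoly Q ζ) (hrank : confRank Q π (fsupport f) = 0) :
    ∃ g ∈ Fpoly Q ζ, piMap π g = piMap π f ∧ fsupport g ⊆ fsupport f ∧
      ¬ ContainsCycle Q (fsupport g) ∧
      confClosure Q π (fsupport g) = confClosure Q π (fsupport f) :=
  statement13_general Q π ζ f hf hrank
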